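/- arXiv:1803.03990 — 6 statements merged into one kernel-verified Lean document; each statement's English description precedes it below -/
import Mathlib

section
/- The assignment V ↦ V/(X³·k[[X]]) is a bijection between the set of k[[X³]]-submodules V ⊆ k[[X]] whose quotient k[[X]]/V is one-dimensional over k, and the set of 2-dimensional k-linear subspaces of the 3-dimensional k-vector space k[[X]]/(X³·k[[X]]). In particular, this set of submodules is in natural bijection with the projective plane ℙ²(k). -/
/-!
Let `V ⊆ k[[X]]` be a `k[[X³]]`-submodule of codimension one. Multiplication by `X³` acts on the
line `k[[X]]/V` by a scalar `c`; if `c ≠ 0` then `X³ - c` is a unit of `k[[X³]]` killing that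
line, which is absurd. So `X³·k[[X]] ⊆ V`, and conversely every subspace containing
`X³·k[[X]]` is a `k[[X³]]`-submodule because `k[[X³]] = k + X³·k[[X³]]`. The submodules are
therefore the planes of `k[[X]]/(X³) ≅ k³`, which by duality are the points of `ℙ²(k)`.
-/

open PowerSeries Module

theorem Submodule.exists_notMem_forall_exists_sub_smul_mem {K E : Type*} [Field K]
    [AddCommGroup E] [Module K E] {V : Submodule K E} (hV : finrank K (E ⧸ V) = 1) :
    ∃ e ∉ V, ∀ x : E, ∃ c : K, x - c • e ∈ V := by
  obtain ⟨v, hv0, hspan⟩ := finrank_eq_one_iff'.mp hV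
  obtain ⟨e, rfl⟩ := V.mkQ_surjective v
  refine ⟨e, fun he => hv0 ((Submodule.Quotient.mk_eq_zero V).mpr he), fun x => ?_⟩
  obtain ⟨c, hc⟩ := hspan (V.mkQ x)
  exact ⟨c, (Submodule.Quotient.eq V).mp (by simpa using hc.symm)⟩

section Algebra

variable {K R : Type*} [Field K] [Ring R] [Algebra K R]

/-- `x` acts on the line `R ⧸ V` by a scalar `c`, and `x - c` would both kill and invert it
unless `c = 0`. -/
theorem Submodule.mul_mem_of_finrank_quotient_eq_one {V : Submodule K R}
    (hV : finrank K (R ⧸ V) = 1) {x : R} (hx : ∀ v ∈ V, x * v ∈ V)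
    (hinv : ∀ c : K, c ≠ 0 → ∃ y : R, y * (x - algebraMap K R c) = 1 ∧ ∀ v ∈ V, y * v ∈ V)
    (r : R) : x * r ∈ V := by
  obtain ⟨e, heV, hspan⟩ := Submodule.exists_notMem_forall_exists_sub_smul_mem hV
  obtain ⟨c, hc⟩ := hspan (x * e)
  have hxe : x * e ∈ V := by
    by_cases hc0 : c = 0
    · simpa [hc0] using hc
    obtain ⟨y, hy, hyV⟩ := hinv c hc0
    refine absurd ?_ heV
    have : e = y * (x * e - c • e) := by
      rw [Algebra.smul_def, ← sub_mul, ← mul_assoc, hy, one_mul]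
    exact this ▸ hyV _ hc
  obtain ⟨d, hd⟩ := hspan r
  have : x * r = x * (r - d • e) + d • (x * e) := by
    rw [mul_sub, mul_smul_comm, sub_add_cancel]
  exact this ▸ add_mem (hx _ hd) (V.smul_mem d hxe)

theorem Ideal.restrictScalars_span_singleton_le_iff {R : Type*} [CommRing R] [Algebra K R]
    (a : R) (V : Submodule K R) :
    (Ideal.span {a}).restrictScalars K ≤ V ↔ ∀ r, a * r ∈ V := by
  refine ⟨fun h r => h (Ideal.mul_mem_right r _ (Ideal.mem_span_singleton_self a)),
    fun h f hf => ?_⟩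
  obtain ⟨r, rfl⟩ := Ideal.mem_span_singleton.mp hf
  exact h r

end Algebra

namespace PowerSeries

variable {K R : Type*} [Field K] [Ring R] [Algebra K R]

theorem ker_pi_coeff (n : ℕ) :
    LinearMap.ker (LinearMap.pi fun i : Fin n => coeff (R := K) i) =
      (Ideal.span {(X : K⟦X⟧) ^ n}).restrictScalars K := by
  ext f
  simp [funext_iff, Ideal.mem_span_singleton, X_pow_dvd_iff, Fin.forall_iff]

theorem pi_coeff_surjective (n : ℕ) :
    Function.Surjective (LinearMap.pi fun i : Fin n => coeff (R := K) i) := fun v =>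
  ⟨mk fun m => if h : m < n then v ⟨m, h⟩ else 0, funext fun i => by simp⟩

noncomputable def quotientSpanXPowEquiv (n : ℕ) :
    (K⟦X⟧ ⧸ (Ideal.span {(X : K⟦X⟧) ^ n}).restrictScalars K) ≃ₗ[K] (Fin n → K) :=
  (Submodule.quotEquivOfEq _ _ (ker_pi_coeff n).symm).trans
    (LinearMap.quotKerEquivOfSurjective _ (pi_coeff_surjective n))

instance (n : ℕ) :
    FiniteDimensional K (K⟦X⟧ ⧸ (Ideal.span {(X : K⟦X⟧) ^ n}).restrictScalars K) :=
  (quotientSpanXPowEquiv n).symm.finiteDimensional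

theorem finrank_quotient_span_X_pow (n : ℕ) :
    finrank K (K⟦X⟧ ⧸ (Ideal.span {(X : K⟦X⟧) ^ n}).restrictScalars K) = n := by
  simp [(quotientSpanXPowEquiv n).finrank_eq]

theorem map_X_mul_mem_of_map_mul_mem (φ : K⟦X⟧ →ₐ[K] R) {V : Submodule K R}
    (hV : finrank K (R ⧸ V) = 1) (hφV : ∀ f, ∀ v ∈ V, φ f * v ∈ V) (r : R) : φ X * r ∈ V := by
  refine V.mul_mem_of_finrank_quotient_eq_one hV (hφV X) (fun c hc => ?_) r
  obtain ⟨u, hu⟩ : IsUnit (X - C c : K⟦X⟧) := by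
    simpa [isUnit_iff_constantCoeff] using hc
  refine ⟨φ ↑u⁻¹, ?_, hφV _⟩
  have : φ (X - C c) = φ X - algebraMap K R c := by
    rw [map_sub, ← algebraMap_eq, AlgHom.commutes]
  rw [← this, ← map_mul, ← hu, Units.inv_mul, map_one]

theorem map_mul_mem_of_map_X_mul_mem (φ : K⟦X⟧ →ₐ[K] R) {V : Submodule K R}
    (hV : ∀ r, φ X * r ∈ V) (f : K⟦X⟧) (v : R) (hv : v ∈ V) : φ f * v ∈ V := by
  have : φ f * v = constantCoeff f • v + φ X * (φ (mk fun p => coeff (p + 1) f) * v) := by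
    conv_lhs => rw [eq_X_mul_shift_add_const f]
    rw [map_add, map_mul, ← algebraMap_eq, AlgHom.commutes, add_mul, Algebra.smul_def, mul_assoc,
      add_comm]
  exact this ▸ add_mem (V.smul_mem _ hv) (hV _)

end PowerSeries

namespace Submodule

variable {K E F : Type*} [Field K] [AddCommGroup E] [Module K E] [AddCommGroup F] [Module K F]

theorem finrank_quotient_add_finrank_map_mkQ (p : Submodule K E) [FiniteDimensional K (E ⧸ p)]
    {V : Submodule K E} (hpV : p ≤ V) :
    finrank K (E ⧸ V) + finrank K (V.map p.mkQ) = finrank K (E ⧸ p) := by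
  rw [← (quotientQuotientEquivQuotient p V hpV).finrank_eq, finrank_quotient_add_finrank]

theorem bijOn_map_mkQ (p : Submodule K E) [FiniteDimensional K (E ⧸ p)] {r s : ℕ}
    (h : finrank K (E ⧸ p) = r + s) :
    Set.BijOn (map p.mkQ) {V | p ≤ V ∧ finrank K (E ⧸ V) = r} {W | finrank K W = s} := by
  refine ⟨fun V ⟨hpV, hV⟩ => ?_, fun V₁ ⟨hpV₁, _⟩ V₂ ⟨hpV₂, _⟩ heq => ?_, fun W hW => ?_⟩
  · have := p.finrank_quotient_add_finrank_map_mkQ hpV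
    simp only [Set.mem_ofPred_eq]
    omega
  · rw [← sup_eq_right.mpr hpV₁, ← sup_eq_right.mpr hpV₂, ← comap_map_mkQ, ← comap_map_mkQ, heq]
  · have hpW : p ≤ W.comap p.mkQ := by
      simpa using comap_mono (f := p.mkQ) (bot_le (a := W))
    have hmap : (W.comap p.mkQ).map p.mkQ = W := map_comap_eq_of_surjective p.mkQ_surjective W
    have := p.finrank_quotient_add_finrank_map_mkQ hpW
    refine ⟨W.comap p.mkQ, ⟨hpW, ?_⟩, hmap⟩
    rw [hmap, hW] at this
    omega

def finrankEqEquivOfLinearEquiv (e : E ≃ₗ[K] F) (n : ℕ) :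
    {W : Submodule K E // finrank K W = n} ≃ {W : Submodule K F // finrank K W = n} :=
  (orderIsoMapComap e).toEquiv.subtypeEquiv fun W => by
    change _ ↔ finrank K (W.map (e : E →ₗ[K] F)) = n
    rw [LinearEquiv.finrank_map_eq]

end Submodule

namespace Subspace

variable {K E : Type*} [Field K] [AddCommGroup E] [Module K E] [FiniteDimensional K E]

noncomputable def finrankEqEquivDual {r s : ℕ} (h : finrank K E = r + s) :
    {W : Subspace K E // finrank K W = s} ≃ {H : Subspace K (Dual K E) // finrank K H = r} :=
  (orderIsoFiniteDimensional (K := K) (V := E)).toEquiv.subtypeEquiv fun W => by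
    have := W.finrank_add_finrank_dualAnnihilator_eq
    change finrank K W = s ↔ finrank K W.dualAnnihilator = r
    omega

noncomputable def hyperplaneEquivProjectivization {n : ℕ} (h : finrank K E = n + 1) :
    {W : Subspace K E // finrank K W = n} ≃ Projectivization K (Fin (n + 1) → K) :=
  (finrankEqEquivDual (add_comm n 1 ▸ h)).trans <|
    (Submodule.finrankEqEquivOfLinearEquiv
      (LinearEquiv.ofFinrankEq _ _ (by simp [Subspace.dual_finrank_eq, h])) 1).trans
      (Projectivization.equivSubmodule K _).symm

end Subspace

theorem corank_one_submodules_biject_with_projective_plane_general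
    {k : Type*} [Field k]
    (φ : PowerSeries k →ₐ[k] PowerSeries k)
    (hφ : ∀ (f : PowerSeries k) (n : ℕ),
      coeff n (φ f) = if 3 ∣ n then coeff (n / 3) f else 0) :
    Module.finrank k
      (PowerSeries k ⧸
        (Ideal.span {(X : PowerSeries k) ^ 3}).restrictScalars k) = 3 ∧
    Set.BijOn
      (fun V : Submodule k (PowerSeries k) =>
        Submodule.map
          ((Ideal.span {(X : PowerSeries k) ^ 3}).restrictScalars k).mkQ V)
      {V : Submodule k (PowerSeries k) |
        (∀ (f : PowerSeries k), ∀ v ∈ V, φ f * v ∈ V) ∧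
        Module.finrank k (PowerSeries k ⧸ V) = 1}
      {W : Submodule k
          (PowerSeries k ⧸
            (Ideal.span {(X : PowerSeries k) ^ 3}).restrictScalars k) |
        Module.finrank k W = 2} ∧
    Nonempty
      ({V : Submodule k (PowerSeries k) //
          (∀ (f : PowerSeries k), ∀ v ∈ V, φ f * v ∈ V) ∧
          Module.finrank k (PowerSeries k ⧸ V) = 1} ≃
        Projectivization k (Fin 3 → k)) := by
  set M := (Ideal.span {(X : k⟦X⟧) ^ 3}).restrictScalars k
  have hφX : φ X = X ^ 3 := by
    ext n
    rw [hφ, coeff_X_pow, coeff_X]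
    split_ifs <;> first | rfl | omega
  have hM (V : Submodule k k⟦X⟧) : M ≤ V ↔ ∀ r, φ X * r ∈ V := by
    rw [hφX, Ideal.restrictScalars_span_singleton_le_iff]
  have hset : {V : Submodule k k⟦X⟧ | (∀ f, ∀ v ∈ V, φ f * v ∈ V) ∧ finrank k (k⟦X⟧ ⧸ V) = 1}
      = {V | M ≤ V ∧ finrank k (k⟦X⟧ ⧸ V) = 1} := by
    ext V
    refine ⟨fun ⟨hV, h1⟩ => ⟨(hM V).mpr (map_X_mul_mem_of_map_mul_mem φ h1 hV), h1⟩,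
      fun ⟨hMV, h1⟩ => ⟨map_mul_mem_of_map_X_mul_mem φ ((hM V).mp hMV), h1⟩⟩
  have h3 : finrank k (k⟦X⟧ ⧸ M) = 3 := finrank_quotient_span_X_pow 3
  have hbij := hset ▸ M.bijOn_map_mkQ (r := 1) (s := 2) h3
  exact ⟨h3, hbij, ⟨hbij.equiv _ |>.trans (Subspace.hyperplaneEquivProjectivization h3)⟩⟩

/-- Let `k` be a field of characteristic `3` and `φ : k[[X]] → k[[X]]` the `k`-algebra
homomorphism `X ↦ X³` (characterized on coefficients), so that a `k[[X³]]`-submodule of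
`k[[X]]` is a `k`-subspace stable under multiplication by all `φ f`.  The quotient
`k[[X]]/(X³·k[[X]])` is a `3`-dimensional `k`-vector space, and the assignment
`V ↦ V/(X³·k[[X]])` is a bijection from the set of `k[[X³]]`-submodules `V ⊆ k[[X]]`
with `k[[X]]/V` one-dimensional over `k` onto the set of `2`-dimensional `k`-subspaces
of `k[[X]]/(X³·k[[X]])`.  In particular this set of submodules is in bijection with the
projective plane `ℙ²(k)`. -/
theorem corank_one_submodules_biject_with_projective_plane
    {k : Type*} [Field k] [CharP k 3]
    (φ : PowerSeries k →ₐ[k] PowerSeries k)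
    (hφ : ∀ (f : PowerSeries k) (n : ℕ),
      coeff n (φ f) = if 3 ∣ n then coeff (n / 3) f else 0) :
    Module.finrank k
      (PowerSeries k ⧸
        (Ideal.span {(X : PowerSeries k) ^ 3}).restrictScalars k) = 3 ∧
    Set.BijOn
      (fun V : Submodule k (PowerSeries k) =>
        Submodule.map
          ((Ideal.span {(X : PowerSeries k) ^ 3}).restrictScalars k).mkQ V)
      {V : Submodule k (PowerSeries k) |
        (∀ (f : PowerSeries k), ∀ v ∈ V, φ f * v ∈ V) ∧
        Module.finrank k (PowerSeries k ⧸ V) = 1}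
      {W : Submodule k
          (PowerSeries k ⧸
            (Ideal.span {(X : PowerSeries k) ^ 3}).restrictScalars k) |
        Module.finrank k W = 2} ∧
    Nonempty
      ({V : Submodule k (PowerSeries k) //
          (∀ (f : PowerSeries k), ∀ v ∈ V, φ f * v ∈ V) ∧
          Module.finrank k (PowerSeries k ⧸ V) = 1} ≃
        Projectivization k (Fin 3 → k)) :=
  corank_one_submodules_biject_with_projective_plane_general φ hφ
end

section
/- The kernel of the multiplication map A = k[[X]] ⊗_{k[[X³]]} k[[X]] → k[[X]], f⊗g ↦ f·g, equals the ideal of A generated by w = X⊗1 − 1⊗X; moreover, regarded as a module over k[[X]] acting through the left tensor factor, this kernel is free with basis {w, w²}. -/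
open PowerSeries TensorProduct

/-!
Since `k⟦X⟧` is free over `k⟦X³⟧` on `1, X, X²`, the ring `A` is free over `k⟦X⟧` (acting on the
left) on `1 ⊗ Xⁱ`, and in these coordinates multiplication is `(a₀, a₁, a₂) ↦ a₀ + a₁X + a₂X²`.
Here `w = (X, -1, 0)` and `w² = (X², -2X, 1)` are unitriangular, so a kernel element, for which
`a₀ = -a₁X - a₂X²`, is uniquely `(-a₁ - 2a₂X) • w + a₂ • w²`.
-/

namespace Algebra.TensorProduct

variable (R : Type*) {S : Type*} [CommRing R] [CommRing S] [Algebra R S]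

noncomputable def tmulOneSubOneTmul (x : S) : S ⊗[R] S := x ⊗ₜ 1 - 1 ⊗ₜ x

variable {R}

theorem tmulOneSubOneTmul_mem_ker (x : S) :
    tmulOneSubOneTmul R x ∈ RingHom.ker (lmul' R).toRingHom := by
  simp [RingHom.mem_ker, tmulOneSubOneTmul]

variable {x : S} {b : Module.Basis (Fin 3) R S} (hb : ∀ i, b i = x ^ (i : ℕ))
include hb

theorem tmulOneSubOneTmul_eq_basis :
    tmulOneSubOneTmul R x = x • basis S b 0 - basis S b 1 := by
  simp [tmulOneSubOneTmul, hb, smul_tmul']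

theorem tmulOneSubOneTmul_sq_eq_basis :
    tmulOneSubOneTmul R x ^ 2 = x ^ 2 • basis S b 0 - (2 * x) • basis S b 1 + basis S b 2 := by
  simp only [tmulOneSubOneTmul, basis_apply, hb, smul_tmul', sq, sub_mul, mul_sub, tmul_mul_tmul]
  simp only [mul_one, one_mul, smul_eq_mul, Fin.val_zero, Fin.val_one, Fin.val_two, pow_zero,
    pow_one, two_mul, add_tmul, sq]
  abel

theorem lmul'_eq_sum_repr (a : S ⊗[R] S) :
    lmul' R a = ∑ i, (basis S b).repr a i * x ^ (i : ℕ) := by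
  conv_lhs => rw [← (basis S b).sum_repr a]
  simp [hb, map_sum, smul_tmul']

theorem eq_smul_add_smul_sq_of_lmul'_eq_zero {a : S ⊗[R] S} (ha : lmul' R a = 0) :
    a = (-(basis S b).repr a 1 - 2 * x * (basis S b).repr a 2) • tmulOneSubOneTmul R x +
      (basis S b).repr a 2 • tmulOneSubOneTmul R x ^ 2 := by
  have hμ := lmul'_eq_sum_repr hb a
  simp only [ha, Fin.sum_univ_three, Fin.val_zero, Fin.val_one, Fin.val_two, pow_zero,
    pow_one, mul_one] at hμ
  conv_lhs => rw [← (basis S b).sum_repr a, Fin.sum_univ_three]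
  rw [tmulOneSubOneTmul_sq_eq_basis hb, tmulOneSubOneTmul_eq_basis hb]
  linear_combination (norm := module) -hμ • basis S b 0

theorem eq_zero_of_smul_add_smul_sq_eq_zero {c d : S}
    (h : c • tmulOneSubOneTmul R x + d • tmulOneSubOneTmul R x ^ 2 = 0) : c = 0 ∧ d = 0 := by
  rw [tmulOneSubOneTmul_sq_eq_basis hb, tmulOneSubOneTmul_eq_basis hb] at h
  have hd : d = 0 := by simpa using congr((basis S b).repr $h 2)
  exact ⟨by simpa [hd] using congr((basis S b).repr $h 1), hd⟩

theorem ker_lmul'_eq_span :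
    RingHom.ker (lmul' R).toRingHom = Ideal.span {tmulOneSubOneTmul R x} := by
  refine le_antisymm (fun a ha => ?_) ?_
  · rw [eq_smul_add_smul_sq_of_lmul'_eq_zero hb ha, Algebra.smul_def, Algebra.smul_def, sq,
      ← mul_assoc, ← add_mul]
    exact Ideal.mul_mem_left _ _ (Ideal.mem_span_singleton_self _)
  · simpa [Ideal.span_le] using tmulOneSubOneTmul_mem_ker (R := R) x

noncomputable def basisKerLmul' :
    Module.Basis (Fin 2) S ((RingHom.ker (lmul' R (S := S)).toRingHom).restrictScalars S) :=
  .mk (v := ![⟨_, tmulOneSubOneTmul_mem_ker x⟩,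
      ⟨_, Ideal.pow_mem_of_mem _ (tmulOneSubOneTmul_mem_ker x) 2 two_pos⟩])
    (by
      refine LinearIndependent.pair_iff.mpr fun c d h => eq_zero_of_smul_add_smul_sq_eq_zero hb ?_
      have := congr(Submodule.subtype _ $h)
      rwa [map_add, map_smul, map_smul, map_zero] at this)
    (by
      rintro ⟨a, ha⟩ -
      rw [Matrix.range_cons_cons_empty, Submodule.mem_span_pair]
      exact ⟨_, _, Subtype.ext (eq_smul_add_smul_sq_of_lmul'_eq_zero hb ha).symm⟩)

theorem basisKerLmul'_zero : (basisKerLmul' hb 0 : S ⊗[R] S) = tmulOneSubOneTmul R x := by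
  rw [basisKerLmul', Module.Basis.mk_apply]; rfl

theorem basisKerLmul'_one : (basisKerLmul' hb 1 : S ⊗[R] S) = tmulOneSubOneTmul R x ^ 2 := by
  rw [basisKerLmul', Module.Basis.mk_apply]; rfl

end Algebra.TensorProduct

namespace PowerSeries

variable {k : Type*} [CommRing k]

noncomputable def trisection (i : ℕ) (f : k⟦X⟧) : k⟦X⟧ := mk fun n => coeff (3 * n + i) f

@[simp]
theorem coeff_trisection (i n : ℕ) (f : k⟦X⟧) : coeff n (trisection i f) = coeff (3 * n + i) f :=
  coeff_mk _ _

variable {φ : k⟦X⟧ →ₐ[k] k⟦X⟧}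
  (hφ : ∀ (f : k⟦X⟧) (n : ℕ), coeff n (φ f) = if 3 ∣ n then coeff (n / 3) f else 0)
include hφ

theorem coeff_apply_mul_X_pow (g : k⟦X⟧) {j : ℕ} (hj : j < 3) (n : ℕ) :
    coeff n (φ g * X ^ j) = if n % 3 = j then coeff (n / 3) g else 0 := by
  rw [coeff_mul_X_pow', hφ]
  by_cases h : n % 3 = j
  · rw [if_pos (by omega), if_pos (by omega), if_pos h, show (n - j) / 3 = n / 3 by omega]
  · rw [if_neg h]
    split_ifs <;> first | rfl | omega

theorem coeff_sum_apply_mul_X_pow (g : Fin 3 → k⟦X⟧) (n : ℕ) :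
    coeff n (∑ j : Fin 3, φ (g j) * X ^ (j : ℕ)) =
      coeff (n / 3) (g ⟨n % 3, n.mod_lt three_pos⟩) := by
  rw [map_sum, Finset.sum_eq_single ⟨n % 3, n.mod_lt three_pos⟩]
  · rw [coeff_apply_mul_X_pow hφ _ (Fin.is_lt _), if_pos rfl]
  · intro j _ hj
    rw [coeff_apply_mul_X_pow hφ _ j.is_lt, if_neg fun h => hj (Fin.ext h.symm)]
  · simp

theorem exists_basis_range_pow_X :
    ∃ b : Module.Basis (Fin 3) φ.range k⟦X⟧, ∀ i, b i = X ^ (i : ℕ) := by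
  refine ⟨.mk (v := fun i => X ^ (i : ℕ)) ?_ ?_, fun i => Module.Basis.mk_apply ..⟩
  · refine Fintype.linearIndependent_iff.mpr fun g hg i => ?_
    choose h hh using fun i => (g i).2
    have hsum : ∑ j : Fin 3, φ (h j) * X ^ (j : ℕ) = 0 := by
      simpa [Subalgebra.smul_def, ← hh] using hg
    suffices h i = 0 by rw [Subtype.ext_iff, ← hh, this, map_zero, ZeroMemClass.coe_zero]
    ext n
    have hn := congr(coeff (3 * n + i) $hsum)
    rwa [coeff_sum_apply_mul_X_pow hφ, show (3 * n + i) / 3 = n by omega,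
      show (⟨(3 * n + i) % 3, _⟩ : Fin 3) = i from Fin.ext (by dsimp only; omega), map_zero] at hn
  · intro f _
    refine (Submodule.mem_span_range_iff_exists_fun _).mpr
      ⟨fun i => ⟨_, φ.mem_range_self (trisection i f)⟩, ?_⟩
    ext n
    simp only [Subalgebra.smul_def, smul_eq_mul]
    rw [coeff_sum_apply_mul_X_pow hφ, coeff_trisection, Nat.div_add_mod]

end PowerSeries

theorem ker_mul_eq_span_w_and_free_general
    {k : Type*} [Field k]
    (φ : PowerSeries k →ₐ[k] PowerSeries k)
    (hφ : ∀ (f : PowerSeries k) (n : ℕ),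
      coeff n (φ f) = if 3 ∣ n then coeff (n / 3) f else 0) :
    RingHom.ker (Algebra.TensorProduct.lmul' (R := φ.range)
        (S := PowerSeries k)).toRingHom =
      Ideal.span {(X : PowerSeries k) ⊗ₜ[φ.range] (1 : PowerSeries k) -
        (1 : PowerSeries k) ⊗ₜ[φ.range] (X : PowerSeries k)} ∧
    ∃ b : Module.Basis (Fin 2) (PowerSeries k)
        ((RingHom.ker (Algebra.TensorProduct.lmul' (R := φ.range)
          (S := PowerSeries k)).toRingHom).restrictScalars (PowerSeries k)),
      ((b 0 : PowerSeries k ⊗[φ.range] PowerSeries k) =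
        (X : PowerSeries k) ⊗ₜ[φ.range] (1 : PowerSeries k) -
          (1 : PowerSeries k) ⊗ₜ[φ.range] (X : PowerSeries k)) ∧
      ((b 1 : PowerSeries k ⊗[φ.range] PowerSeries k) =
        ((X : PowerSeries k) ⊗ₜ[φ.range] (1 : PowerSeries k) -
          (1 : PowerSeries k) ⊗ₜ[φ.range] (X : PowerSeries k)) ^ 2) := by
  obtain ⟨b, hb⟩ := PowerSeries.exists_basis_range_pow_X hφ
  open Algebra.TensorProduct in
  exact ⟨ker_lmul'_eq_span hb, basisKerLmul' hb, basisKerLmul'_zero hb, basisKerLmul'_one hb⟩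

/-- Let `k` be a field of characteristic `3` and `φ : k[[X]] → k[[X]]` the `k`-algebra
homomorphism `X ↦ X³` (characterized on coefficients), with range `k[[X³]] = φ.range`.
In `A = k[[X]] ⊗_{k[[X³]]} k[[X]]`, the kernel of the multiplication map `A → k[[X]]`,
`f ⊗ g ↦ f·g`, equals the ideal generated by `w = X⊗1 − 1⊗X`; moreover, as a module over
`k[[X]]` acting through the left tensor factor, this kernel is free with basis `{w, w²}`. -/
theorem ker_mul_eq_span_w_and_free
    {k : Type*} [Field k] [CharP k 3]
    (φ : PowerSeries k →ₐ[k] PowerSeries k)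
    (hφ : ∀ (f : PowerSeries k) (n : ℕ),
      coeff n (φ f) = if 3 ∣ n then coeff (n / 3) f else 0) :
    RingHom.ker (Algebra.TensorProduct.lmul' (R := φ.range)
        (S := PowerSeries k)).toRingHom =
      Ideal.span {(X : PowerSeries k) ⊗ₜ[φ.range] (1 : PowerSeries k) -
        (1 : PowerSeries k) ⊗ₜ[φ.range] (X : PowerSeries k)} ∧
    ∃ b : Module.Basis (Fin 2) (PowerSeries k)
        ((RingHom.ker (Algebra.TensorProduct.lmul' (R := φ.range)
          (S := PowerSeries k)).toRingHom).restrictScalars (PowerSeries k)),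
      ((b 0 : PowerSeries k ⊗[φ.range] PowerSeries k) =
        (X : PowerSeries k) ⊗ₜ[φ.range] (1 : PowerSeries k) -
          (1 : PowerSeries k) ⊗ₜ[φ.range] (X : PowerSeries k)) ∧
      ((b 1 : PowerSeries k ⊗[φ.range] PowerSeries k) =
        ((X : PowerSeries k) ⊗ₜ[φ.range] (1 : PowerSeries k) -
          (1 : PowerSeries k) ⊗ₜ[φ.range] (X : PowerSeries k)) ^ 2) :=
  ker_mul_eq_span_w_and_free_general φ hφ
end

section
/- Let V ⊆ k[[X]] be a k[[X³]]-submodule whose quotient k[[X]]/V is one-dimensional over k. Then w² = (X⊗1 − 1⊗X)² does NOT belong to Im(V), the image of V ⊗_{k[[X³]]} k[[X]] in A = k[[X]] ⊗_{k[[X³]]} k[[X]]. -/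
open PowerSeries TensorProduct

/-!
Multiplication by `X³ = φ X` acts on the line `k⟦X⟧ ⧸ V` by a scalar `c`; if `c ≠ 0` then
`X³ - c = φ (X - c)` is a unit, forcing `V = ⊤`. Hence `X³ k⟦X⟧ ⊆ V`. Every element of
`k⟦X³⟧` is a constant modulo `X³`, so for `j < 3` the map `g ⊗ f ↦ coeff j f • [g]` into
`k⟦X⟧ ⧸ V` is well defined on `A` and kills `Im(V)`. It sends
`w² = X² ⊗ 1 - 2 X ⊗ X + 1 ⊗ X²` to `[X²]`, `-2 [X]`, `[1]` for `j = 0, 1, 2`. As `2 ≠ 0`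
in characteristic `3`, if `w² ∈ Im(V)` then `1, X, X² ∈ V`, so `V = ⊤`.
-/

section Quotient

variable {k R : Type*} [Field k] [CommRing R] [Algebra k R] {V : Submodule k R}

theorem Submodule.ne_top_of_finrank_quotient_eq_one (hV : Module.finrank k (R ⧸ V) = 1) :
    V ≠ ⊤ := by
  rintro rfl
  simp [Module.finrank_zero_of_subsingleton] at hV

theorem Submodule.exists_mul_sub_algebraMap_mem (hV : Module.finrank k (R ⧸ V) = 1) {t : R}
    (ht : ∀ v ∈ V, t * v ∈ V) : ∃ c : k, ∀ g, (t - algebraMap k R c) * g ∈ V := by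
  have hVt : V ≤ V.comap (LinearMap.mulLeft k t) := ht
  obtain ⟨c, hc, -⟩ := (V.mapQ V _ hVt).existsUnique_eq_smul_id_of_finrank_eq_one hV
  refine ⟨c, fun g => ?_⟩
  have htg : V.mkQ (t * g) = c • V.mkQ g := LinearMap.congr_fun hc (V.mkQ g)
  rwa [← Submodule.Quotient.mk_eq_zero, sub_mul, Submodule.Quotient.mk_sub, ← Algebra.smul_def,
    Submodule.Quotient.mk_smul, sub_eq_zero]

theorem Submodule.map_X_mul_mem_of_finrank_quotient_eq_one (φ : k⟦X⟧ →ₐ[k] R)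
    (hVφ : ∀ f, ∀ v ∈ V, φ f * v ∈ V) (hV : Module.finrank k (R ⧸ V) = 1) (g : R) :
    φ X * g ∈ V := by
  obtain ⟨c, hc⟩ := V.exists_mul_sub_algebraMap_mem hV (hVφ X)
  rcases eq_or_ne c 0 with rfl | hc0
  · simpa using hc g
  have hunit : IsUnit (φ X - algebraMap k R c) := by
    rw [← φ.commutes, ← map_sub]
    exact (isUnit_iff_constantCoeff.mpr (by simpa using hc0)).map φ
  refine absurd (Submodule.eq_top_iff'.mpr fun f => ?_) (ne_top_of_finrank_quotient_eq_one hV)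
  simpa [← mul_assoc] using hc (↑hunit.unit⁻¹ * f)

end Quotient

section Pairing

variable {k R M : Type*} [Field k] [CommRing R] [Algebra k R] [AddCommGroup M] [Module k M]

theorem LinearMap.map_mul_eq_smul_of_dvd_sub {ℓ : R →ₗ[k] M} {t : R}
    (hℓ : ∀ h, ℓ (t * h) = 0) {r : R} {a : k} (hr : t ∣ r - algebraMap k R a) (g : R) :
    ℓ (r * g) = a • ℓ g := by
  obtain ⟨h, hh⟩ := hr
  have hrg : r * g = a • g + t * (h * g) := by
    rw [Algebra.smul_def, ← mul_assoc, ← hh]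
    ring
  rw [hrg, map_add, map_smul, hℓ, add_zero]

def tensorPairing (S : Subalgebra k R) {t : R} (hS : ∀ r ∈ S, ∃ a : k, t ∣ r - algebraMap k R a)
    (ℓ₁ : R →ₗ[k] M) (ℓ₂ : R →ₗ[k] k) (h₁ : ∀ h, ℓ₁ (t * h) = 0) (h₂ : ∀ h, ℓ₂ (t * h) = 0) :
    R ⊗[S] R →+ M :=
  TensorProduct.liftAddHom
    (AddMonoidHom.mk' (fun g => AddMonoidHom.mk' (fun f => ℓ₂ f • ℓ₁ g)
      (fun f₁ f₂ => by simp only [map_add, add_smul]))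
      (fun g₁ g₂ => by
        ext f
        simp only [map_add, smul_add, AddMonoidHom.mk'_apply, AddMonoidHom.add_apply]))
    (fun r g f => by
      obtain ⟨a, ha⟩ := hS r r.2
      simp only [AddMonoidHom.mk'_apply, Subalgebra.smul_def, smul_eq_mul,
        ℓ₁.map_mul_eq_smul_of_dvd_sub h₁ ha, ℓ₂.map_mul_eq_smul_of_dvd_sub h₂ ha, smul_smul,
        mul_comm a])

variable (S : Subalgebra k R) {t : R} (hS : ∀ r ∈ S, ∃ a : k, t ∣ r - algebraMap k R a)
  (ℓ₁ : R →ₗ[k] M) (ℓ₂ : R →ₗ[k] k) (h₁ : ∀ h, ℓ₁ (t * h) = 0) (h₂ : ∀ h, ℓ₂ (t * h) = 0)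

@[simp]
theorem tensorPairing_tmul (g f : R) :
    tensorPairing S hS ℓ₁ ℓ₂ h₁ h₂ (g ⊗ₜ f) = ℓ₂ f • ℓ₁ g :=
  rfl

theorem closure_tmul_le_ker_tensorPairing (V : Submodule k R) (hV : ∀ v ∈ V, ℓ₁ v = 0) :
    AddSubgroup.closure {a : R ⊗[S] R | ∃ v ∈ V, ∃ f : R, a = v ⊗ₜ[S] f} ≤
      (tensorPairing S hS ℓ₁ ℓ₂ h₁ h₂).ker := by
  rw [AddSubgroup.closure_le]
  rintro _ ⟨v, hv, f, rfl⟩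
  simp [hV v hv]

end Pairing

theorem Algebra.TensorProduct.tmul_one_sub_one_tmul_sq {S R : Type*} [CommRing S] [CommRing R]
    [Algebra S R] (x : R) :
    (x ⊗ₜ[S] (1 : R) - (1 : R) ⊗ₜ[S] x) ^ 2 =
      (x ^ 2) ⊗ₜ[S] (1 : R) - 2 • (x ⊗ₜ[S] x) + (1 : R) ⊗ₜ[S] (x ^ 2) := by
  simp only [sq, sub_mul, mul_sub, tmul_mul_tmul, mul_one, one_mul, two_nsmul]
  abel

section CoeffMap

variable {k : Type*} [Field k] {φ : k⟦X⟧ →ₐ[k] k⟦X⟧} {n : ℕ}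

theorem map_X_eq_X_pow_of_coeff_map
    (hφ : ∀ f m, coeff m (φ f) = if n ∣ m then coeff (m / n) f else 0) (hn : n ≠ 0) :
    φ X = X ^ n := by
  ext m
  rw [hφ, coeff_X_pow, coeff_X]
  by_cases hnm : n ∣ m
  · obtain ⟨q, rfl⟩ := hnm
    simp [Nat.mul_div_cancel_left _ (Nat.pos_of_ne_zero hn), hn]
  · rw [if_neg hnm, if_neg (by rintro rfl; exact hnm dvd_rfl)]

theorem X_pow_dvd_sub_C_of_mem_range
    (hφ : ∀ f m, coeff m (φ f) = if n ∣ m then coeff (m / n) f else 0) {r : k⟦X⟧}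
    (hr : r ∈ φ.range) : X ^ n ∣ r - C (constantCoeff r) := by
  obtain ⟨f, rfl⟩ := hr
  refine X_pow_dvd_iff.mpr fun m hm => ?_
  rcases Nat.eq_zero_or_pos m with rfl | hm0
  · simp
  · simp [hφ, coeff_C, hm0.ne', Nat.not_dvd_of_pos_of_lt hm0 hm]

end CoeffMap

theorem PowerSeries.eq_top_of_X_pow_mem {k : Type*} [Field k] {V : Submodule k k⟦X⟧} {n : ℕ}
    (hV : ∀ h, X ^ n * h ∈ V) (hX : ∀ i < n, (X : k⟦X⟧) ^ i ∈ V) : V = ⊤ := by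
  refine Submodule.eq_top_iff'.mpr fun g => ?_
  obtain ⟨h, hh⟩ : X ^ n ∣ g - ∑ i ∈ Finset.range n, coeff i g • X ^ i :=
    X_pow_dvd_iff.mpr fun m hm => by simp [coeff_X_pow, hm]
  rw [← sub_add_cancel g (∑ i ∈ Finset.range n, coeff i g • X ^ i), hh]
  exact V.add_mem (hV h) (V.sum_mem fun i hi => V.smul_mem _ (hX i (Finset.mem_range.mp hi)))

/-- Let `k` be a field of characteristic `3`, `φ : k[[X]] → k[[X]]` the `k`-algebra
homomorphism `X ↦ X³` (characterized on coefficients), with range `k[[X³]] = φ.range`,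
and `A = k[[X]] ⊗_{k[[X³]]} k[[X]]`.  Let `V ⊆ k[[X]]` be a `k[[X³]]`-submodule (a
`k`-subspace stable under multiplication by all `φ f`) with `k[[X]]/V` one-dimensional
over `k`, and let `Im(V) ⊆ A` be the additive subgroup generated by the elements `v ⊗ f`
with `v ∈ V`, `f ∈ k[[X]]` (the image of `V ⊗_{k[[X³]]} k[[X]]` in `A`).  Then
`w² = (X⊗1 − 1⊗X)²` does not belong to `Im(V)`. -/
theorem w_sq_not_mem_image
    {k : Type*} [Field k] [CharP k 3]
    (φ : PowerSeries k →ₐ[k] PowerSeries k)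
    (hφ : ∀ (f : PowerSeries k) (n : ℕ),
      coeff n (φ f) = if 3 ∣ n then coeff (n / 3) f else 0)
    (V : Submodule k (PowerSeries k))
    (hVmod : ∀ (f : PowerSeries k), ∀ v ∈ V, φ f * v ∈ V)
    (hdim : Module.finrank k (PowerSeries k ⧸ V) = 1) :
    ((X : PowerSeries k) ⊗ₜ[φ.range] (1 : PowerSeries k) -
        (1 : PowerSeries k) ⊗ₜ[φ.range] (X : PowerSeries k)) ^ 2 ∉
      AddSubgroup.closure
        {a : PowerSeries k ⊗[φ.range] PowerSeries k |
          ∃ v ∈ V, ∃ f : PowerSeries k, a = v ⊗ₜ[φ.range] f} := by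
  intro hw
  have hX3 : ∀ h, X ^ 3 * h ∈ V := by
    simpa only [map_X_eq_X_pow_of_coeff_map hφ three_ne_zero] using
      V.map_X_mul_mem_of_finrank_quotient_eq_one φ hVmod hdim
  have hS : ∀ r ∈ φ.range, ∃ a : k, X ^ 3 ∣ r - algebraMap k k⟦X⟧ a :=
    fun r hr => ⟨_, X_pow_dvd_sub_C_of_mem_range hφ hr⟩
  have hq : ∀ h, V.mkQ (X ^ 3 * h) = 0 := fun h => (Submodule.Quotient.mk_eq_zero V).mpr (hX3 h)
  have hpair : ∀ j < 3, coeff j 1 • V.mkQ (X ^ 2) - 2 • (coeff j X • V.mkQ X) +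
      coeff j (X ^ 2) • V.mkQ 1 = 0 := fun j hj => by
    have hker := closure_tmul_le_ker_tensorPairing φ.range hS V.mkQ (coeff j) hq
      (fun h => X_pow_dvd_iff.mp ⟨h, rfl⟩ j hj) V (by simp) hw
    simpa only [AddMonoidHom.mem_ker, Algebra.TensorProduct.tmul_one_sub_one_tmul_sq, map_add,
      map_sub, map_nsmul, tensorPairing_tmul] using hker
  have htwo : (2 : k) ≠ 0 := by
    intro h
    have := (CharP.cast_eq_zero_iff k 3 2).mp (by exact_mod_cast h)
    norm_num at this
  have hone : (1 : k⟦X⟧) ∈ V := by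
    simpa [coeff_X, coeff_X_pow, Submodule.Quotient.mk_eq_zero] using hpair 2 (by norm_num)
  have hX : X ∈ V := by
    simpa [coeff_X, coeff_X_pow, ← Nat.cast_smul_eq_nsmul k, htwo,
      Submodule.Quotient.mk_eq_zero] using hpair 1 (by norm_num)
  have hXsq : X ^ 2 ∈ V := by
    simpa [coeff_X, coeff_X_pow, Submodule.Quotient.mk_eq_zero] using hpair 0 (by norm_num)
  refine V.ne_top_of_finrank_quotient_eq_one hdim (eq_top_of_X_pow_mem hX3 fun i hi => ?_)
  interval_cases i <;> simpa
end

section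
/- Let V ⊆ k[[X]] be a k[[X³]]-submodule whose quotient k[[X]]/V is one-dimensional over k. Then w²·(1⊗X) belongs to Im(V), the image of V ⊗_{k[[X³]]} k[[X]] in A = k[[X]] ⊗_{k[[X³]]} k[[X]], if and only if both X ∈ V and X² ∈ V. -/
/-!
Since `φ = expand 3`, the subspace `V` is stable under multiplication by `X³`; as `X³ - c` is a
unit for `c ≠ 0`, multiplication by `X³` must act as `0` on the line `k⟦X⟧ ⧸ V`, i.e.
`X³ • k⟦X⟧ ⊆ V`. In characteristic `3`, `w² (1 ⊗ X) = X² ⊗ X + X ⊗ X² + X³ ⊗ 1`, which gives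
the backward implication. Conversely, every element of `k⟦X³⟧` is congruent to its constant term
modulo `X³`, so for `j < 3` the rule `g ⊗ f ↦ coeff j f • [g]` is a well-defined additive map
`A → k⟦X⟧ ⧸ V` vanishing on `Im(V)`; for `j = 2` and `j = 1` it sends `w² (1 ⊗ X)` to `[X]`
and `[X²]`.
-/

open PowerSeries TensorProduct

theorem sub_sq_mul_one_tmul_eq_of_charP_three {R S : Type*} [CommRing R] [CommRing S]
    [Algebra R S] [CharP S 3] {x : S} {r : R} (hr : algebraMap R S r = x ^ 3) :
    (x ⊗ₜ[R] (1 : S) - (1 : S) ⊗ₜ[R] x) ^ 2 * ((1 : S) ⊗ₜ[R] x) =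
      (x ^ 2) ⊗ₜ[R] x + x ⊗ₜ[R] (x ^ 2) + (x ^ 3) ⊗ₜ[R] (1 : S) := by
  have h3 : (3 : S ⊗[R] S) = 0 := by
    rw [← map_ofNat (Algebra.TensorProduct.includeLeft (R := R) (S := R) (A := S) (B := S)) 3,
      CharP.ofNat_eq_zero, map_zero]
  have hcube : (1 : S) ⊗ₜ[R] (x ^ 3) = (x ^ 3) ⊗ₜ[R] (1 : S) := by
    rw [← hr, Algebra.TensorProduct.tmul_one_eq_one_tmul]
  set a := x ⊗ₜ[R] (1 : S)
  set b := (1 : S) ⊗ₜ[R] x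
  calc (a - b) ^ 2 * b = a ^ 2 * b + a * b ^ 2 + b ^ 3 := by
        linear_combination (-(a * b ^ 2)) * h3
    _ = _ := by simp [a, b, Algebra.TensorProduct.tmul_pow, hcube]

namespace PowerSeries

section Expand

variable {R : Type*} [CommRing R] (p : ℕ) (hp : p ≠ 0)

theorem X_pow_dvd_expand_sub_C (f : R⟦X⟧) :
    X ^ p ∣ expand p hp f - C (constantCoeff f) := by
  refine X_pow_dvd_iff.mpr fun m hm => ?_
  rcases eq_or_ne m 0 with rfl | hm0
  · simp
  · rw [map_sub, coeff_expand_of_not_dvd p hp f (Nat.not_dvd_of_pos_of_lt (by omega) hm),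
      coeff_C, if_neg hm0, sub_zero]

theorem coeff_expand_mul_of_lt {j : ℕ} (hj : j < p) (f g : R⟦X⟧) :
    coeff j (expand p hp f * g) = constantCoeff f * coeff j g := by
  obtain ⟨t, ht⟩ := X_pow_dvd_expand_sub_C p hp f
  rw [eq_add_of_sub_eq ht, add_mul, map_add, coeff_C_mul, mul_assoc,
    X_pow_dvd_iff.mp (dvd_mul_right _ _) j hj, zero_add]

end Expand

variable {k : Type*} [Field k]

theorem mul_mem_of_finrank_quotient_eq_one {V : Submodule k k⟦X⟧}
    (hV : Module.finrank k (k⟦X⟧ ⧸ V) = 1) {a : k⟦X⟧} (ha : constantCoeff a = 0)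
    (haV : ∀ v ∈ V, a * v ∈ V) (f : k⟦X⟧) : a * f ∈ V := by
  obtain ⟨c, hc, -⟩ :=
    (V.mapQ V (LinearMap.mulLeft k a) haV).existsUnique_eq_smul_id_of_finrank_eq_one hV
  have hsub (g : k⟦X⟧) : (a - C c) * g ∈ V := by
    rw [sub_mul, ← smul_eq_C_mul, ← Submodule.Quotient.eq]
    exact LinearMap.congr_fun hc (V.mkQ g)
  rcases eq_or_ne c 0 with rfl | hc0
  · simpa using hsub f
  · have hunit : IsUnit (a - C c) := by
      rw [isUnit_iff_constantCoeff]; simp [ha, hc0]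
    have : V = ⊤ := by
      refine eq_top_iff.mpr fun g _ => ?_
      obtain ⟨u, hu⟩ := hunit
      simpa [← hu] using hsub (↑u⁻¹ * g)
    rw [this, Module.finrank_zero_of_subsingleton] at hV
    exact absurd hV zero_ne_one

section Quotient

variable {p : ℕ} {hp : p ≠ 0} {V : Submodule k k⟦X⟧}

theorem mkQ_expand_mul (hV : ∀ f, X ^ p * f ∈ V) (f g : k⟦X⟧) :
    V.mkQ (expand p hp f * g) = constantCoeff f • V.mkQ g := by
  obtain ⟨t, ht⟩ := X_pow_dvd_expand_sub_C p hp f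
  rw [eq_add_of_sub_eq ht, add_mul, mul_assoc, ← smul_eq_C_mul, map_add, map_smul,
    Submodule.mkQ_apply, (Submodule.Quotient.mk_eq_zero V).mpr (hV _), zero_add]

variable (hp V) in
noncomputable def mkQTensorCoeff (hV : ∀ f, X ^ p * f ∈ V) (j : ℕ) (hj : j < p) :
    k⟦X⟧ ⊗[(expand (R := k) p hp).range] k⟦X⟧ →+ k⟦X⟧ ⧸ V :=
  liftAddHom
    (AddMonoidHom.mk' (fun g => AddMonoidHom.mk' (fun f => coeff j f • V.mkQ g)
        fun f₁ f₂ => by rw [map_add, add_smul])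
      fun g₁ g₂ => by
        ext f
        simp only [AddMonoidHom.mk'_apply, AddMonoidHom.add_apply, map_add, smul_add])
    (by
      rintro ⟨_, h, rfl⟩ g f
      simp only [AddMonoidHom.mk'_apply, Subalgebra.smul_def, smul_eq_mul, AlgHom.toRingHom_eq_coe,
        RingHom.coe_coe]
      rw [mkQ_expand_mul hV, coeff_expand_mul_of_lt p hp hj, smul_smul, mul_comm])

@[simp]
theorem mkQTensorCoeff_tmul (hV : ∀ f, X ^ p * f ∈ V) {j : ℕ} (hj : j < p) (g f : k⟦X⟧) :
    mkQTensorCoeff hp V hV j hj (g ⊗ₜ f) = coeff j f • V.mkQ g :=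
  rfl

theorem mkQTensorCoeff_eq_zero_of_mem_closure (hV : ∀ f, X ^ p * f ∈ V) {j : ℕ} (hj : j < p)
    {a : k⟦X⟧ ⊗[(expand (R := k) p hp).range] k⟦X⟧}
    (ha : a ∈ AddSubgroup.closure {a | ∃ v ∈ V, ∃ f : k⟦X⟧, a = v ⊗ₜ f}) :
    mkQTensorCoeff hp V hV j hj a = 0 := by
  refine (AddSubgroup.closure_le (K := (mkQTensorCoeff hp V hV j hj).ker)).mpr ?_ ha
  rintro _ ⟨v, hv, f, rfl⟩
  simp [(Submodule.Quotient.mk_eq_zero V).mpr hv]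

end Quotient

end PowerSeries

/-- Let `k` be a field of characteristic `3`, `φ : k[[X]] → k[[X]]` the `k`-algebra
homomorphism `X ↦ X³` (characterized on coefficients), with range `k[[X³]] = φ.range`,
and `A = k[[X]] ⊗_{k[[X³]]} k[[X]]`.  Let `V ⊆ k[[X]]` be a `k[[X³]]`-submodule (a
`k`-subspace stable under multiplication by all `φ f`) with `k[[X]]/V` one-dimensional
over `k`, and let `Im(V) ⊆ A` be the additive subgroup generated by the elements `v ⊗ f`
with `v ∈ V`, `f ∈ k[[X]]`.  Then, with `w = X⊗1 − 1⊗X`, one has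
`w²·(1⊗X) ∈ Im(V)` if and only if both `X ∈ V` and `X² ∈ V`. -/
theorem w_sq_mul_one_tmul_X_mem_image_iff
    {k : Type*} [Field k] [CharP k 3]
    (φ : PowerSeries k →ₐ[k] PowerSeries k)
    (hφ : ∀ (f : PowerSeries k) (n : ℕ),
      coeff n (φ f) = if 3 ∣ n then coeff (n / 3) f else 0)
    (V : Submodule k (PowerSeries k))
    (hVmod : ∀ (f : PowerSeries k), ∀ v ∈ V, φ f * v ∈ V)
    (hdim : Module.finrank k (PowerSeries k ⧸ V) = 1) :
    (((X : PowerSeries k) ⊗ₜ[φ.range] (1 : PowerSeries k) -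
        (1 : PowerSeries k) ⊗ₜ[φ.range] (X : PowerSeries k)) ^ 2 *
        ((1 : PowerSeries k) ⊗ₜ[φ.range] (X : PowerSeries k)) ∈
      AddSubgroup.closure
        {a : PowerSeries k ⊗[φ.range] PowerSeries k |
          ∃ v ∈ V, ∃ f : PowerSeries k, a = v ⊗ₜ[φ.range] f}) ↔
      ((X : PowerSeries k) ∈ V ∧ (X : PowerSeries k) ^ 2 ∈ V) := by
  obtain rfl : φ = expand 3 three_ne_zero :=
    AlgHom.ext fun f => ext fun n => by rw [hφ, coeff_expand]
  have hX3 : ∀ f, X ^ 3 * f ∈ V :=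
    mul_mem_of_finrank_quotient_eq_one hdim (by simp) fun v hv => by simpa using hVmod X v hv
  have : CharP k⟦X⟧ 3 := charP_of_injective_algebraMap (algebraMap k k⟦X⟧).injective 3
  rw [sub_sq_mul_one_tmul_eq_of_charP_three (r := ⟨X ^ 3, X, expand_X ..⟩) rfl]
  constructor
  · intro hmem
    have hcoeff (j : ℕ) (hj : j < 3) := mkQTensorCoeff_eq_zero_of_mem_closure hX3 hj hmem
    exact ⟨by simpa [coeff_X, coeff_X_pow] using hcoeff 2 (by norm_num),
      by simpa [coeff_X, coeff_X_pow] using hcoeff 1 (by norm_num)⟩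
  · rintro ⟨hX, hX2⟩
    exact add_mem (add_mem (AddSubgroup.subset_closure ⟨_, hX2, X, rfl⟩)
      (AddSubgroup.subset_closure ⟨_, hX, X ^ 2, rfl⟩))
      (AddSubgroup.subset_closure ⟨_, by simpa using hX3 1, 1, rfl⟩)
end

section
/- Let V ⊆ k[[X]] be a k[[X³]]-submodule whose quotient k[[X]]/V is one-dimensional over k. Then w²·(1⊗X²) belongs to Im(V), the image of V ⊗_{k[[X³]]} k[[X]] in A = k[[X]] ⊗_{k[[X³]]} k[[X]], if and only if X² ∈ V. -/
/-!
As `k⟦X⟧ ⧸ V` is one-dimensional, `X³` acts on it by a scalar `c`; if `c ≠ 0`, then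
`X³ - c = φ (X - c)` is a unit of `k⟦X³⟧` acting by zero, which is absurd. Hence `c = 0`, i.e.
`X³ k⟦X⟧ ⊆ V`.

Expanding, `w² (1 ⊗ X²) = X² ⊗ X² - 2 X ⊗ X³ + 1 ⊗ X⁴`, and moving `X³` across the tensor sign
puts the last two terms in `Im(V)`; this gives one implication. For the other, an element
`r ∈ k⟦X³⟧` acts both on `k⟦X⟧ ⧸ V` and on the coefficient of `X²` through its constant term only,
so `g ⊗ h ↦ coeff 2 h • [g]` is a well-defined additive map `A → k⟦X⟧ ⧸ V`. It kills `Im(V)` and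
sends `w² (1 ⊗ X²)` to `[X²]`.
-/

open PowerSeries TensorProduct

namespace PowerSeries

section Range

variable {R : Type*} [CommRing R] {p : ℕ} {φ : R⟦X⟧ →ₐ[R] R⟦X⟧}
  (hφ : ∀ (f : R⟦X⟧) (n : ℕ), coeff n (φ f) = if p ∣ n then coeff (n / p) f else 0)
include hφ

theorem map_X_eq_X_pow (hp : 0 < p) : φ X = X ^ p := by
  ext n
  rw [hφ, coeff_X_pow, coeff_X]
  by_cases hn : p ∣ n
  · obtain ⟨m, rfl⟩ := hn
    simp [Nat.mul_div_cancel_left m hp, hp.ne']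
  · rw [if_neg hn, if_neg (by rintro rfl; exact hn dvd_rfl)]

theorem X_pow_dvd_sub_C_constantCoeff {r : R⟦X⟧} (hr : r ∈ φ.range) :
    X ^ p ∣ r - C (constantCoeff r) := by
  obtain ⟨u, rfl⟩ := φ.mem_range.mp hr
  refine X_pow_dvd_iff.mpr fun m hm => ?_
  rcases m with _ | m
  · simp
  · rw [map_sub, hφ, coeff_C, if_neg (Nat.succ_ne_zero m),
      if_neg fun h => (Nat.le_of_dvd m.succ_pos h).not_gt hm, sub_zero]

theorem coeff_mul_of_mem_range {r : R⟦X⟧} (hr : r ∈ φ.range) {n : ℕ} (hn : n < p)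
    (h : R⟦X⟧) : coeff n (r * h) = constantCoeff r * coeff n h := by
  obtain ⟨q, hq⟩ := X_pow_dvd_sub_C_constantCoeff hφ hr
  rw [← sub_eq_zero, ← coeff_C_mul, ← map_sub, ← sub_mul, hq, mul_assoc,
    coeff_X_pow_mul', if_neg (by omega)]

end Range

section Quotient

variable {k : Type*} [Field k] {p : ℕ} {φ : k⟦X⟧ →ₐ[k] k⟦X⟧}
  (hφ : ∀ (f : k⟦X⟧) (n : ℕ), coeff n (φ f) = if p ∣ n then coeff (n / p) f else 0)
  {V : Submodule k k⟦X⟧}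
include hφ

theorem X_pow_mul_mem_of_finrank_quotient_eq_one (hVmod : ∀ f, ∀ v ∈ V, φ f * v ∈ V)
    (hp : 0 < p) (hdim : Module.finrank k (k⟦X⟧ ⧸ V) = 1) (f : k⟦X⟧) : X ^ p * f ∈ V := by
  have hX := map_X_eq_X_pow hφ hp
  let T : (k⟦X⟧ ⧸ V) →ₗ[k] k⟦X⟧ ⧸ V :=
    V.mapQ V (LinearMap.mulLeft k (X ^ p)) fun v hv => hX ▸ hVmod X v hv
  obtain ⟨c, hc, -⟩ := T.existsUnique_eq_smul_id_of_finrank_eq_one hdim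
  have hmem : ∀ g, (X ^ p - C c) * g ∈ V := fun g => by
    rw [← Submodule.Quotient.mk_eq_zero, sub_mul, ← smul_eq_C_mul, Submodule.Quotient.mk_sub,
      Submodule.Quotient.mk_smul, sub_eq_zero]
    exact LinearMap.congr_fun hc (V.mkQ g)
  obtain rfl : c = 0 := by
    by_contra hc0
    obtain ⟨w, hw⟩ : IsUnit (X - C c : k⟦X⟧) := by
      simpa [isUnit_iff_constantCoeff] using hc0
    have hφw : φ w = X ^ p - C c := by
      rw [hw, map_sub, hX, ← algebraMap_eq, φ.commutes]
    have hV : ∀ g, g ∈ V := fun g => by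
      simpa [← hφw, ← mul_assoc, ← map_mul] using hmem (φ ↑w⁻¹ * g)
    have := Module.nontrivial_of_finrank_eq_succ hdim
    obtain ⟨q, hq⟩ := exists_ne (0 : k⟦X⟧ ⧸ V)
    obtain ⟨g, rfl⟩ := V.mkQ_surjective q
    exact hq ((Submodule.Quotient.mk_eq_zero V).mpr (hV g))
  simpa using hmem f

theorem mkQ_mul_of_mem_range (hV : ∀ f, X ^ p * f ∈ V) {r : k⟦X⟧} (hr : r ∈ φ.range)
    (g : k⟦X⟧) : V.mkQ (r * g) = constantCoeff r • V.mkQ g := by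
  obtain ⟨q, hq⟩ := X_pow_dvd_sub_C_constantCoeff hφ hr
  rw [← map_smul, ← sub_eq_zero, ← map_sub, smul_eq_C_mul, ← sub_mul, hq, mul_assoc,
    Submodule.mkQ_apply, Submodule.Quotient.mk_eq_zero]
  exact hV _

noncomputable def coeffSmulMkQ (hV : ∀ f, X ^ p * f ∈ V) (n : ℕ) (hn : n < p) :
    k⟦X⟧ ⊗[φ.range] k⟦X⟧ →+ k⟦X⟧ ⧸ V :=
  liftAddHom
    (AddMonoidHom.mk' (fun g => AddMonoidHom.mk' (fun h => coeff n h • V.mkQ g)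
      fun _ _ => by rw [map_add, add_smul]) fun _ _ => by ext; simp [smul_add])
    fun r g h => by
      change coeff n h • V.mkQ ((r : k⟦X⟧) * g) = coeff n ((r : k⟦X⟧) * h) • V.mkQ g
      rw [mkQ_mul_of_mem_range hφ hV r.2, coeff_mul_of_mem_range hφ r.2 hn, smul_smul, mul_comm]

@[simp]
theorem coeffSmulMkQ_tmul (hV : ∀ f, X ^ p * f ∈ V) {n : ℕ} (hn : n < p) (g h : k⟦X⟧) :
    coeffSmulMkQ hφ hV n hn (g ⊗ₜ h) = coeff n h • V.mkQ g :=
  rfl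

theorem closure_tmul_le_ker_coeffSmulMkQ (hV : ∀ f, X ^ p * f ∈ V) {n : ℕ} (hn : n < p) :
    AddSubgroup.closure {a : k⟦X⟧ ⊗[φ.range] k⟦X⟧ | ∃ v ∈ V, ∃ f : k⟦X⟧, a = v ⊗ₜ f} ≤
      (coeffSmulMkQ hφ hV n hn).ker := by
  rw [AddSubgroup.closure_le]
  rintro _ ⟨v, hv, f, rfl⟩
  simp [(Submodule.Quotient.mk_eq_zero V).mpr hv]

theorem tmul_X_pow_mul_mem_closure (hp : 0 < p) (hV : ∀ f, X ^ p * f ∈ V) (g h : k⟦X⟧) :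
    g ⊗ₜ[φ.range] (X ^ p * h) ∈
      AddSubgroup.closure {a : k⟦X⟧ ⊗[φ.range] k⟦X⟧ | ∃ v ∈ V, ∃ f : k⟦X⟧, a = v ⊗ₜ f} := by
  have hXp : X ^ p ∈ φ.range := ⟨X, map_X_eq_X_pow hφ hp⟩
  exact AddSubgroup.subset_closure ⟨_, hV g, h, (smul_tmul (⟨X ^ p, hXp⟩ : φ.range) g h).symm⟩

end Quotient

end PowerSeries

theorem Algebra.TensorProduct.sub_tmul_sq_mul {R A : Type*} [CommRing R] [CommRing A]
    [Algebra R A] (x y : A) :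
    (x ⊗ₜ[R] (1 : A) - (1 : A) ⊗ₜ[R] x) ^ 2 * ((1 : A) ⊗ₜ[R] y) =
      (x ^ 2) ⊗ₜ y - 2 • (x ⊗ₜ (x * y)) + (1 : A) ⊗ₜ (x ^ 2 * y) := by
  simp only [sq, sub_mul, mul_sub, Algebra.TensorProduct.tmul_mul_tmul, one_mul, mul_one,
    two_nsmul, mul_assoc]
  abel

theorem w_sq_mul_one_tmul_X_sq_mem_image_iff_general
    {k : Type*} [Field k]
    (φ : PowerSeries k →ₐ[k] PowerSeries k)
    (hφ : ∀ (f : PowerSeries k) (n : ℕ),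
      coeff n (φ f) = if 3 ∣ n then coeff (n / 3) f else 0)
    (V : Submodule k (PowerSeries k))
    (hVmod : ∀ (f : PowerSeries k), ∀ v ∈ V, φ f * v ∈ V)
    (hdim : Module.finrank k (PowerSeries k ⧸ V) = 1) :
    (((X : PowerSeries k) ⊗ₜ[φ.range] (1 : PowerSeries k) -
        (1 : PowerSeries k) ⊗ₜ[φ.range] (X : PowerSeries k)) ^ 2 *
        ((1 : PowerSeries k) ⊗ₜ[φ.range] ((X : PowerSeries k) ^ 2)) ∈
      AddSubgroup.closure
        {a : PowerSeries k ⊗[φ.range] PowerSeries k |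
          ∃ v ∈ V, ∃ f : PowerSeries k, a = v ⊗ₜ[φ.range] f}) ↔
      (X : PowerSeries k) ^ 2 ∈ V := by
  have hV := X_pow_mul_mem_of_finrank_quotient_eq_one hφ hVmod three_pos hdim
  rw [Algebra.TensorProduct.sub_tmul_sq_mul, show (X : k⟦X⟧) * X ^ 2 = X ^ 3 * 1 by ring,
    show (X : k⟦X⟧) ^ 2 * X ^ 2 = X ^ 3 * X by ring]
  constructor
  · intro hmem
    have hker := closure_tmul_le_ker_coeffSmulMkQ hφ hV (n := 2) (by norm_num) hmem
    simp only [AddMonoidHom.mem_ker, map_add, map_sub, map_nsmul, coeffSmulMkQ_tmul] at hker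
    simpa [coeff_X_pow] using hker
  · intro hX2
    exact add_mem (sub_mem (AddSubgroup.subset_closure ⟨_, hX2, _, rfl⟩)
      (nsmul_mem (tmul_X_pow_mul_mem_closure hφ three_pos hV X 1) 2))
      (tmul_X_pow_mul_mem_closure hφ three_pos hV 1 X)

/-- Let `k` be a field of characteristic `3`, `φ : k[[X]] → k[[X]]` the `k`-algebra
homomorphism `X ↦ X³` (characterized on coefficients), with range `k[[X³]] = φ.range`,
and `A = k[[X]] ⊗_{k[[X³]]} k[[X]]`.  Let `V ⊆ k[[X]]` be a `k[[X³]]`-submodule (a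
`k`-subspace stable under multiplication by all `φ f`) with `k[[X]]/V` one-dimensional
over `k`, and let `Im(V) ⊆ A` be the additive subgroup generated by the elements `v ⊗ f`
with `v ∈ V`, `f ∈ k[[X]]`.  Then, with `w = X⊗1 − 1⊗X`, one has
`w²·(1⊗X²) ∈ Im(V)` if and only if `X² ∈ V`. -/
theorem w_sq_mul_one_tmul_X_sq_mem_image_iff
    {k : Type*} [Field k] [CharP k 3]
    (φ : PowerSeries k →ₐ[k] PowerSeries k)
    (hφ : ∀ (f : PowerSeries k) (n : ℕ),
      coeff n (φ f) = if 3 ∣ n then coeff (n / 3) f else 0)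
    (V : Submodule k (PowerSeries k))
    (hVmod : ∀ (f : PowerSeries k), ∀ v ∈ V, φ f * v ∈ V)
    (hdim : Module.finrank k (PowerSeries k ⧸ V) = 1) :
    (((X : PowerSeries k) ⊗ₜ[φ.range] (1 : PowerSeries k) -
        (1 : PowerSeries k) ⊗ₜ[φ.range] (X : PowerSeries k)) ^ 2 *
        ((1 : PowerSeries k) ⊗ₜ[φ.range] ((X : PowerSeries k) ^ 2)) ∈
      AddSubgroup.closure
        {a : PowerSeries k ⊗[φ.range] PowerSeries k |
          ∃ v ∈ V, ∃ f : PowerSeries k, a = v ⊗ₜ[φ.range] f}) ↔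
      (X : PowerSeries k) ^ 2 ∈ V :=
  w_sq_mul_one_tmul_X_sq_mem_image_iff_general φ hφ V hVmod hdim
end

section
/- Let V ⊆ k[[X]] be a k[[X³]]-submodule whose quotient k[[X]]/V is one-dimensional over k. Then w²·(1⊗X³) belongs to Im(V), the image of V ⊗_{k[[X³]]} k[[X]] in A = k[[X]] ⊗_{k[[X³]]} k[[X]]. -/
/-!
Multiplication by `X³` preserves `V` and acts on the line `k[[X]]/V` by a scalar `c`. Were
`c ≠ 0`, the unit `X³ - c` would map `k[[X]]` into `V`, forcing `V = k[[X]]`; so `c = 0`, i.e.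
`X³·k[[X]] ⊆ V`. As `X³ = φ X` lies in the base ring, `1 ⊗ X³ = X³ ⊗ 1` in `A`, hence
`a·(1 ⊗ X³) ∈ Im(V)` for every `a ∈ A`, in particular for `a = w²`.
-/

open PowerSeries TensorProduct

theorem PowerSeries.eq_X_pow_of_coeff {R : Type*} [CommSemiring R] {d : ℕ} (hd : 0 < d)
    {g : PowerSeries R} (hg : ∀ n, coeff n g = if d ∣ n then coeff (n / d) X else 0) :
    g = X ^ d := by
  ext n
  rw [hg, coeff_X_pow]
  by_cases hdvd : d ∣ n
  · obtain ⟨m, rfl⟩ := hdvd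
    simp [Nat.mul_div_cancel_left m hd, coeff_X, hd.ne']
  · rw [if_neg hdvd, if_neg]
    rintro rfl
    exact hdvd dvd_rfl

theorem Submodule.apply_mem_of_finrank_quotient_eq_one {K M : Type*} [Field K] [AddCommGroup M]
    [Module K M] (V : Submodule K M) (T : Module.End K M) (hTV : V ≤ V.comap T)
    (hT : ∀ c : K, c ≠ 0 → Function.Surjective (T - c • (1 : Module.End K M)))
    (hdim : Module.finrank K (M ⧸ V) = 1) (x : M) : T x ∈ V := by
  obtain ⟨c, hc, -⟩ := (V.mapQ V T hTV).existsUnique_eq_smul_id_of_finrank_eq_one hdim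
  have hTc : ∀ m, (T - c • (1 : Module.End K M)) m ∈ V := fun m => by
    rw [← Submodule.Quotient.mk_eq_zero, LinearMap.sub_apply, Submodule.Quotient.mk_sub,
      ← Submodule.mapQ_apply V V T (h := hTV), hc]
    simp
  obtain rfl : c = 0 := by
    by_contra hc0
    have hV : V = ⊤ := eq_top_iff.2 fun m _ => by
      obtain ⟨m', rfl⟩ := hT c hc0 m
      exact hTc m'
    subst hV
    rw [Module.finrank_zero_of_subsingleton] at hdim
    exact zero_ne_one hdim
  simpa using hTc x

theorem PowerSeries.mul_mem_of_finrank_quotient_eq_one_s8 {k : Type*} [Field k]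
    (V : Submodule k (PowerSeries k)) {t : PowerSeries k} (ht : constantCoeff t = 0)
    (htV : ∀ v ∈ V, t * v ∈ V) (hdim : Module.finrank k (PowerSeries k ⧸ V) = 1)
    (g : PowerSeries k) : t * g ∈ V := by
  refine V.apply_mem_of_finrank_quotient_eq_one (LinearMap.mulLeft k t) htV
    (fun c hc f => ?_) hdim g
  have hunit : IsUnit (t - C c) := by simp [isUnit_iff_constantCoeff, ht, hc]
  refine ⟨hunit.unit⁻¹ * f, ?_⟩
  simp only [LinearMap.sub_apply, LinearMap.smul_apply, Module.End.one_apply,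
    LinearMap.mulLeft_apply, smul_eq_C_mul, ← mul_assoc, ← sub_mul]
  rw [hunit.mul_val_inv, one_mul]

theorem mul_tmul_one_mem_closure_tmul {R S : Type*} [CommRing R] [CommRing S] [Algebra R S]
    {V : Set S} {s : S} (hs : ∀ g, s * g ∈ V) (y : S ⊗[R] S) :
    y * (s ⊗ₜ[R] 1) ∈ AddSubgroup.closure {a | ∃ v ∈ V, ∃ f : S, a = v ⊗ₜ[R] f} := by
  induction y using TensorProduct.induction_on with
  | zero => rw [zero_mul]; exact zero_mem _
  | tmul p q =>
    refine AddSubgroup.subset_closure ⟨s * p, hs p, q, ?_⟩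
    rw [Algebra.TensorProduct.tmul_mul_tmul, mul_comm, mul_one]
  | add y z hy hz => rw [add_mul]; exact add_mem hy hz

theorem w_sq_mul_one_tmul_X_cubed_mem_image_general
    {k : Type*} [Field k]
    (φ : PowerSeries k →ₐ[k] PowerSeries k)
    (hφ : ∀ (f : PowerSeries k) (n : ℕ),
      coeff n (φ f) = if 3 ∣ n then coeff (n / 3) f else 0)
    (V : Submodule k (PowerSeries k))
    (hVmod : ∀ (f : PowerSeries k), ∀ v ∈ V, φ f * v ∈ V)
    (hdim : Module.finrank k (PowerSeries k ⧸ V) = 1) :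
    ((X : PowerSeries k) ⊗ₜ[φ.range] (1 : PowerSeries k) -
        (1 : PowerSeries k) ⊗ₜ[φ.range] (X : PowerSeries k)) ^ 2 *
        ((1 : PowerSeries k) ⊗ₜ[φ.range] ((X : PowerSeries k) ^ 3)) ∈
      AddSubgroup.closure
        {a : PowerSeries k ⊗[φ.range] PowerSeries k |
          ∃ v ∈ V, ∃ f : PowerSeries k, a = v ⊗ₜ[φ.range] f} := by
  have hφX : φ X = X ^ 3 := eq_X_pow_of_coeff three_pos (hφ X)
  have hX3V : ∀ g, X ^ 3 * g ∈ V :=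
    mul_mem_of_finrank_quotient_eq_one_s8 V (by simp) (fun v hv => hφX ▸ hVmod X v hv) hdim
  have hswap : (1 : PowerSeries k) ⊗ₜ[φ.range] (X ^ 3 : PowerSeries k) =
      (X ^ 3 : PowerSeries k) ⊗ₜ[φ.range] (1 : PowerSeries k) :=
    (Algebra.TensorProduct.tmul_one_eq_one_tmul (⟨X ^ 3, X, hφX⟩ : φ.range)).symm
  rw [hswap]
  exact mul_tmul_one_mem_closure_tmul hX3V _

/-- Let `k` be a field of characteristic `3`, `φ : k[[X]] → k[[X]]` the `k`-algebra
homomorphism `X ↦ X³` (characterized on coefficients), with range `k[[X³]] = φ.range`,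
and `A = k[[X]] ⊗_{k[[X³]]} k[[X]]`.  Let `V ⊆ k[[X]]` be a `k[[X³]]`-submodule (a
`k`-subspace stable under multiplication by all `φ f`) with `k[[X]]/V` one-dimensional
over `k`, and let `Im(V) ⊆ A` be the additive subgroup generated by the elements `v ⊗ f`
with `v ∈ V`, `f ∈ k[[X]]`.  Then, with `w = X⊗1 − 1⊗X`, one has
`w²·(1⊗X³) ∈ Im(V)`. -/
theorem w_sq_mul_one_tmul_X_cubed_mem_image
    {k : Type*} [Field k] [CharP k 3]
    (φ : PowerSeries k →ₐ[k] PowerSeries k)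
    (hφ : ∀ (f : PowerSeries k) (n : ℕ),
      coeff n (φ f) = if 3 ∣ n then coeff (n / 3) f else 0)
    (V : Submodule k (PowerSeries k))
    (hVmod : ∀ (f : PowerSeries k), ∀ v ∈ V, φ f * v ∈ V)
    (hdim : Module.finrank k (PowerSeries k ⧸ V) = 1) :
    ((X : PowerSeries k) ⊗ₜ[φ.range] (1 : PowerSeries k) -
        (1 : PowerSeries k) ⊗ₜ[φ.range] (X : PowerSeries k)) ^ 2 *
        ((1 : PowerSeries k) ⊗ₜ[φ.range] ((X : PowerSeries k) ^ 3)) ∈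
      AddSubgroup.closure
        {a : PowerSeries k ⊗[φ.range] PowerSeries k |
          ∃ v ∈ V, ∃ f : PowerSeries k, a = v ⊗ₜ[φ.range] f} :=
  w_sq_mul_one_tmul_X_cubed_mem_image_general φ hφ V hVmod hdim
end
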